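/- (Louis's missing information principle.) For every θ ∈ Θ, the observed information matrix of the marginal satisfies −∇² log m(θ) = −∫ ∇²_θ log f(θ, b) π_θ(b) db − [ ∫ ∇_θ log f(θ, b) ∇_θ log f(θ, b)ᵀ π_θ(b) db − ( ∫ ∇_θ log f(θ, b) π_θ(b) db ) ( ∫ ∇_θ log f(θ, b) π_θ(b) db )ᵀ ], i.e., minus the posterior expectation of the complete-data Hessian minus the posterior covariance matrix of the complete-data score. -/

import Mathlib

/-!
For a positive `C²` function `u`, `∇² log u = u⁻¹ ∇²u - u⁻² ∇u ∇uᵀ`. Apply this to the marginal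
`m`, whose first two derivatives are the integrals of those of `f`, and to each `f(·, b)`.
Since the score is `f⁻¹ ∇f` and `π = f / m`, the posterior mean of the complete-data Hessian plus
the posterior mean of the outer square of the score is `m⁻¹ ∫ ∇²f`, and the posterior mean score
is `m⁻¹ ∫ ∇f`; substituting these into the formula for `∇² log m` gives the identity.
-/
open MeasureTheory InnerProductSpace Filter Topology
open scoped RealInnerProductSpace

section LogHessian

variable {E : Type*} [NormedAddCommGroup E] [InnerProductSpace ℝ E]

theorem innerSL_smul_smulRight_smul (c : ℝ) (v : E) :
    (innerSL ℝ (c • v)).smulRight (c • v) = c ^ 2 • (innerSL ℝ v).smulRight v := by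
  ext w
  simp only [ContinuousLinearMap.smulRight_apply, innerSL_apply_apply, real_inner_smul_left,
    smul_apply, smul_smul]
  ring_nf

variable [CompleteSpace E] {u : E → ℝ} {g x : E}

theorem HasGradientAt.hasFDerivAt_innerSL (h : HasGradientAt u g x) :
    HasFDerivAt u (innerSL ℝ g) x :=
  hasGradientAt_iff_hasFDerivAt.mp h

theorem HasGradientAt.log (h : HasGradientAt u g x) (hx : u x ≠ 0) :
    HasGradientAt (fun t => Real.log (u t)) ((u x)⁻¹ • g) x := by
  rw [hasGradientAt_iff_hasFDerivAt, map_smul]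
  exact (Real.hasDerivAt_log hx).comp_hasFDerivAt x h.hasFDerivAt_innerSL

theorem ContDiffAt.hasFDerivAt_gradient (hu : ContDiffAt ℝ 2 u x) :
    HasFDerivAt (gradient u) (fderiv ℝ (gradient u) x) x := by
  have hfderiv : DifferentiableAt ℝ (fderiv ℝ u) x :=
    (hu.fderiv_right (m := 1) (by norm_num)).differentiableAt (by norm_num)
  exact ((toDual ℝ E).symm.toContinuousLinearEquiv.differentiableAt.comp x hfderiv).hasFDerivAt

theorem fderiv_gradient_log {G : E → E} {H : E →L[ℝ] E}
    (hG : ∀ᶠ y in 𝓝 x, HasGradientAt u (G y) y) (hx : u x ≠ 0) (hH : HasFDerivAt G H x) :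
    fderiv ℝ (gradient fun t => Real.log (u t)) x
      = (u x)⁻¹ • H - (u x ^ 2)⁻¹ • (innerSL ℝ (G x)).smulRight (G x) := by
  have hGx : HasFDerivAt u (innerSL ℝ (G x)) x := hG.self_of_nhds.hasFDerivAt_innerSL
  have hne : ∀ᶠ y in 𝓝 x, u y ≠ 0 := hGx.continuousAt.eventually_ne hx
  have hgrad : (gradient fun t => Real.log (u t)) =ᶠ[𝓝 x] fun y => (u y)⁻¹ • G y := by
    filter_upwards [hG, hne] with y hGy hy
    exact (hGy.log hy).gradient
  have hinv : HasFDerivAt (fun y => (u y)⁻¹) (-(u x ^ 2)⁻¹ • innerSL ℝ (G x)) x :=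
    (hasDerivAt_inv hx).comp_hasFDerivAt x hGx
  rw [hgrad.fderiv_eq, (hinv.fun_smul hH).fderiv]
  ext w
  simp [sub_eq_add_neg, smul_smul]

theorem ContDiffAt.fderiv_gradient_log (hu : ContDiffAt ℝ 2 u x) (hx : u x ≠ 0) :
    fderiv ℝ (gradient fun t => Real.log (u t)) x
      = (u x)⁻¹ • fderiv ℝ (gradient u) x
        - (u x ^ 2)⁻¹ • (innerSL ℝ (gradient u x)).smulRight (gradient u x) := by
  refine _root_.fderiv_gradient_log ?_ hx hu.hasFDerivAt_gradient
  filter_upwards [hu.eventually (by simp)] with y hy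
  exact (hy.differentiableAt (by norm_num)).hasGradientAt

end LogHessian

theorem statement5_general
    (p l : ℕ)
    (Θ : Set (EuclideanSpace ℝ (Fin p))) (hΘ : IsOpen Θ)
    (f : EuclideanSpace ℝ (Fin p) → EuclideanSpace ℝ (Fin l) → ℝ)
    (hf_pos : ∀ θ b, 0 < f θ b)
    (hf_smooth : ∀ b, ContDiffOn ℝ 2 (fun θ => f θ b) Θ)
    -- the marginal m(θ) = ∫ f(θ, b) db satisfies 0 < m(θ) < ∞ for every θ ∈ Θ
    (m : EuclideanSpace ℝ (Fin p) → ℝ)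
    (hm : ∀ θ, m θ = ∫ b, f θ b)
    (hm_pos : ∀ θ ∈ Θ, 0 < m θ)
    -- the posterior density
    (π : EuclideanSpace ℝ (Fin p) → EuclideanSpace ℝ (Fin l) → ℝ)
    (hπ : ∀ θ b, π θ b = f θ b / m θ)
    -- differentiation under the integral sign for the first θ-derivative
    (hDUI1 : ∀ θ ∈ Θ, HasGradientAt (fun θ' => ∫ b, f θ' b)
      (∫ b, gradient (fun t => f t b) θ) θ)
    -- differentiation under the integral sign for the second θ-derivative
    (hDUI2 : ∀ θ ∈ Θ, HasFDerivAt (fun θ' => ∫ b, gradient (fun t => f t b) θ')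
      (∫ b, fderiv ℝ (fun t => gradient (fun u => f u b) t) θ) θ)
    -- π_θ-integrability of the complete-data score, Hessian and outer product of the score
    (hhess_int : ∀ θ ∈ Θ, Integrable
      (fun b => π θ b • fderiv ℝ (fun t => gradient (fun u => Real.log (f u b)) t) θ))
    (houter_int : ∀ θ ∈ Θ, Integrable
      (fun b => π θ b • ((innerSL ℝ (gradient (fun t => Real.log (f t b)) θ)).smulRight
        (gradient (fun t => Real.log (f t b)) θ))))
    -- the complete-data score and its posterior mean
    (score : EuclideanSpace ℝ (Fin p) → EuclideanSpace ℝ (Fin l) → EuclideanSpace ℝ (Fin p))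
    (hscore : ∀ θ b, score θ b = gradient (fun t => Real.log (f t b)) θ)
    (sbar : EuclideanSpace ℝ (Fin p) → EuclideanSpace ℝ (Fin p))
    (hsbar : ∀ θ, sbar θ = ∫ b, π θ b • score θ b) :
    ∀ θ ∈ Θ,
      -(fderiv ℝ (fun t => gradient (fun u => Real.log (m u)) t) θ) =
        -(∫ b, π θ b • fderiv ℝ (fun t => gradient (fun u => Real.log (f u b)) t) θ)
        - ((∫ b, π θ b • ((innerSL ℝ (score θ b)).smulRight (score θ b)))
            - (innerSL ℝ (sbar θ)).smulRight (sbar θ)) := by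
  intro θ hθ
  have hΘθ : Θ ∈ 𝓝 θ := hΘ.mem_nhds hθ
  have hmθ : m θ ≠ 0 := (hm_pos θ hθ).ne'
  have hfθ : ∀ b, f θ b ≠ 0 := fun b => (hf_pos θ b).ne'
  have hf_C2 : ∀ b, ContDiffAt ℝ 2 (fun t => f t b) θ := fun b => (hf_smooth b).contDiffAt hΘθ
  have hm_grad : ∀ᶠ y in 𝓝 θ, HasGradientAt m (∫ b, gradient (fun t => f t b) y) y := by
    filter_upwards [hΘθ] with y hy
    simpa only [← funext hm] using hDUI1 y hy
  have hscore_eq (b) : score θ b = (f θ b)⁻¹ • gradient (fun t => f t b) θ := by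
    rw [hscore]
    exact (((hf_C2 b).differentiableAt (by norm_num)).hasGradientAt.log (hfθ b)).gradient
  have hsbar_eq : sbar θ = (m θ)⁻¹ • ∫ b, gradient (fun t => f t b) θ := by
    rw [hsbar, ← integral_smul]
    congr 1
    funext b
    rw [hπ, hscore_eq, smul_smul]
    match_scalars
    field_simp [hfθ b]
  have hposterior (b) : π θ b • fderiv ℝ (fun t => gradient (fun u => Real.log (f u b)) t) θ
      + π θ b • (innerSL ℝ (score θ b)).smulRight (score θ b)
      = (m θ)⁻¹ • fderiv ℝ (fun t => gradient (fun u => f u b) t) θ := by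
    rw [(hf_C2 b).fderiv_gradient_log (hfθ b), hscore_eq, innerSL_smul_smulRight_smul, hπ]
    match_scalars
    · field_simp [hfθ b]
    · field_simp [hfθ b]
      ring
  have hmean : (∫ b, π θ b • fderiv ℝ (fun t => gradient (fun u => Real.log (f u b)) t) θ)
      + ∫ b, π θ b • (innerSL ℝ (score θ b)).smulRight (score θ b)
      = (m θ)⁻¹ • ∫ b, fderiv ℝ (fun t => gradient (fun u => f u b) t) θ := by
    rw [← integral_add (hhess_int θ hθ) (by simpa only [← hscore] using houter_int θ hθ),
      ← integral_smul]
    exact integral_congr_ae (Eventually.of_forall hposterior)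
  rw [fderiv_gradient_log hm_grad hmθ (hDUI2 θ hθ), hsbar_eq, innerSL_smul_smulRight_smul,
    ← hmean]
  match_scalars <;> field_simp

theorem statement5
    (p l : ℕ)
    (Θ : Set (EuclideanSpace ℝ (Fin p))) (hΘ : IsOpen Θ)
    (f : EuclideanSpace ℝ (Fin p) → EuclideanSpace ℝ (Fin l) → ℝ)
    (hf_pos : ∀ θ b, 0 < f θ b)
    (hf_meas : Measurable (Function.uncurry f))
    (hf_smooth : ∀ b, ContDiffOn ℝ 2 (fun θ => f θ b) Θ)
    -- the marginal m(θ) = ∫ f(θ, b) db satisfies 0 < m(θ) < ∞ for every θ ∈ Θ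
    (m : EuclideanSpace ℝ (Fin p) → ℝ)
    (hm : ∀ θ, m θ = ∫ b, f θ b)
    (hm_int : ∀ θ ∈ Θ, Integrable (f θ))
    (hm_pos : ∀ θ ∈ Θ, 0 < m θ)
    -- the posterior density
    (π : EuclideanSpace ℝ (Fin p) → EuclideanSpace ℝ (Fin l) → ℝ)
    (hπ : ∀ θ b, π θ b = f θ b / m θ)
    -- differentiation under the integral sign for the first θ-derivative
    (hDUI1 : ∀ θ ∈ Θ, HasGradientAt (fun θ' => ∫ b, f θ' b)
      (∫ b, gradient (fun t => f t b) θ) θ)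
    -- differentiation under the integral sign for the second θ-derivative
    (hDUI2 : ∀ θ ∈ Θ, HasFDerivAt (fun θ' => ∫ b, gradient (fun t => f t b) θ')
      (∫ b, fderiv ℝ (fun t => gradient (fun u => f u b) t) θ) θ)
    -- π_θ-integrability of the complete-data score, Hessian and outer product of the score
    (hscore_int : ∀ θ ∈ Θ, Integrable
      (fun b => π θ b • gradient (fun t => Real.log (f t b)) θ))
    (hhess_int : ∀ θ ∈ Θ, Integrable
      (fun b => π θ b • fderiv ℝ (fun t => gradient (fun u => Real.log (f u b)) t) θ))
    (houter_int : ∀ θ ∈ Θ, Integrable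
      (fun b => π θ b • ((innerSL ℝ (gradient (fun t => Real.log (f t b)) θ)).smulRight
        (gradient (fun t => Real.log (f t b)) θ))))
    -- the complete-data score and its posterior mean
    (score : EuclideanSpace ℝ (Fin p) → EuclideanSpace ℝ (Fin l) → EuclideanSpace ℝ (Fin p))
    (hscore : ∀ θ b, score θ b = gradient (fun t => Real.log (f t b)) θ)
    (sbar : EuclideanSpace ℝ (Fin p) → EuclideanSpace ℝ (Fin p))
    (hsbar : ∀ θ, sbar θ = ∫ b, π θ b • score θ b) :
    ∀ θ ∈ Θ,
      -(fderiv ℝ (fun t => gradient (fun u => Real.log (m u)) t) θ) =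
        -(∫ b, π θ b • fderiv ℝ (fun t => gradient (fun u => Real.log (f u b)) t) θ)
        - ((∫ b, π θ b • ((innerSL ℝ (score θ b)).smulRight (score θ b)))
            - (innerSL ℝ (sbar θ)).smulRight (sbar θ)) :=
  statement5_general p l Θ hΘ f hf_pos hf_smooth m hm hm_pos π hπ hDUI1 hDUI2 hhess_int houter_int
    score hscore sbar hsbar
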